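/- arXiv:2112.13211 — 5 statements merged into one kernel-verified Lean document; each statement's English description precedes it below -/
import Mathlib

section
/- In the braid group B₅ with generators σ₁,…,σ₄, letting τ = σ₁σ₂σ₃σ₄ and Δ the positive half-twist (so Δ² is the full twist, which is central), one has (σ₃⁻¹σ₄⁻¹σ₂⁻¹)(Δ²τ²)(σ₂σ₄σ₃) = Δ²τ(σ₃σ₄)(σ₄σ₃); in particular Δ²τσ₃σ₄σ₄σ₃ is conjugate to Δ²τ². -/
/-!
Writing τ = σ₁σ₂σ₃σ₄, conjugation by τ shifts the generators: τσᵢ = σᵢ₊₁τ for i = 1, 2, 3.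
Pushing w = σ₂σ₄σ₃ through τ gives wτ = τσ₁σ₃σ₂, while τw = σ₁σ₂σ₃σ₂σ₄σ₄σ₃ = σ₁σ₃σ₂σ₃σ₄σ₄σ₃;
hence τ²w = wτσ₃σ₄σ₄σ₃, and the central factor z rides along.
-/

section BraidShift

variable {M : Type*} [Monoid M] {a b c d : M}

theorem braid_tau_mul_first (hab : a * b * a = b * a * b) (hac : a * c = c * a)
    (had : a * d = d * a) : a * b * c * d * a = b * (a * b * c * d) := by
  calc a * b * c * d * a = a * b * c * (a * d) := by rw [had]; simp only [mul_assoc]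
    _ = a * b * (a * c) * d := by rw [hac]; simp only [mul_assoc]
    _ = b * (a * b * c * d) := by rw [← mul_assoc (a * b), hab]; simp only [mul_assoc]

theorem braid_tau_mul_second (hbc : b * c * b = c * b * c) (hac : a * c = c * a)
    (hbd : b * d = d * b) : a * b * c * d * b = c * (a * b * c * d) := by
  calc a * b * c * d * b = a * (b * c * b) * d := by
        rw [mul_assoc _ d, ← hbd]; simp only [mul_assoc]
    _ = a * c * b * c * d := by rw [hbc]; simp only [mul_assoc]
    _ = c * (a * b * c * d) := by rw [hac]; simp only [mul_assoc]

theorem braid_tau_mul_third (hcd : c * d * c = d * c * d) (had : a * d = d * a)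
    (hbd : b * d = d * b) : a * b * c * d * c = d * (a * b * c * d) := by
  calc a * b * c * d * c = a * b * (d * c * d) := by rw [← hcd]; simp only [mul_assoc]
    _ = a * (d * b) * c * d := by rw [← hbd]; simp only [mul_assoc]
    _ = d * (a * b * c * d) := by rw [← mul_assoc, had]; simp only [mul_assoc]

theorem braid_tau_mul_bdc (hbc : b * c * b = c * b * c) (hbd : b * d = d * b) :
    a * b * c * d * (b * d * c) = a * c * b * c * d * d * c := by
  calc a * b * c * d * (b * d * c) = a * b * c * (d * b) * d * c := by simp only [mul_assoc]
    _ = a * (b * c * b) * d * d * c := by rw [← hbd]; simp only [mul_assoc]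
    _ = a * c * b * c * d * d * c := by rw [hbc]; simp only [mul_assoc]

theorem bdc_mul_of_shift {τ : M} (τa : τ * a = b * τ) (τb : τ * b = c * τ)
    (τc : τ * c = d * τ) : b * d * c * τ = τ * (a * c * b) := by
  calc b * d * c * τ = b * d * (c * τ) := mul_assoc _ _ _
    _ = b * (d * τ) * b := by rw [← τb]; simp only [mul_assoc]
    _ = b * τ * c * b := by rw [← τc]; simp only [mul_assoc]
    _ = τ * (a * c * b) := by rw [← τa]; simp only [mul_assoc]

theorem braid_tau_sq_mul (hab : a * b * a = b * a * b) (hbc : b * c * b = c * b * c)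
    (hcd : c * d * c = d * c * d) (hac : a * c = c * a) (had : a * d = d * a)
    (hbd : b * d = d * b) :
    (a * b * c * d) ^ 2 * (b * d * c) =
      b * d * c * (a * b * c * d) * (c * d) * (d * c) := by
  have shift := bdc_mul_of_shift (braid_tau_mul_first hab hac had)
    (braid_tau_mul_second hbc hac hbd) (braid_tau_mul_third hcd had hbd)
  calc (a * b * c * d) ^ 2 * (b * d * c)
        = a * b * c * d * (a * b * c * d * (b * d * c)) := by rw [pow_two, mul_assoc]
    _ = a * b * c * d * (a * c * b) * (c * d) * (d * c) := by
        rw [braid_tau_mul_bdc hbc hbd]; simp only [mul_assoc]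
    _ = b * d * c * (a * b * c * d) * (c * d) * (d * c) := by rw [shift]

end BraidShift

/-- In B₅ (abstractly: σ₁,…,σ₄ satisfying the braid relations and z a central
element playing the role of the full twist Δ²), with τ = σ₁σ₂σ₃σ₄ one has
(σ₃⁻¹σ₄⁻¹σ₂⁻¹)(Δ²τ²)(σ₂σ₄σ₃) = Δ²τ(σ₃σ₄)(σ₄σ₃); in particular
Δ²τσ₃σ₄σ₄σ₃ is conjugate to Δ²τ². -/
theorem B5_conjugate {G : Type*} [Group G] (σ₁ σ₂ σ₃ σ₄ z : G)
    (h12 : σ₁ * σ₂ * σ₁ = σ₂ * σ₁ * σ₂)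
    (h23 : σ₂ * σ₃ * σ₂ = σ₃ * σ₂ * σ₃)
    (h34 : σ₃ * σ₄ * σ₃ = σ₄ * σ₃ * σ₄)
    (h13 : σ₁ * σ₃ = σ₃ * σ₁)
    (h14 : σ₁ * σ₄ = σ₄ * σ₁)
    (h24 : σ₂ * σ₄ = σ₄ * σ₂)
    (hz : ∀ g : G, z * g = g * z)
    (τ : G) (hτ : τ = σ₁ * σ₂ * σ₃ * σ₄) :
    σ₃⁻¹ * σ₄⁻¹ * σ₂⁻¹ * (z * τ ^ 2) * (σ₂ * σ₄ * σ₃) =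
        z * τ * (σ₃ * σ₄) * (σ₄ * σ₃) ∧
      IsConj (z * τ ^ 2) (z * τ * (σ₃ * σ₄) * (σ₄ * σ₃)) := by
  set w := σ₂ * σ₄ * σ₃
  have hw : σ₃⁻¹ * σ₄⁻¹ * σ₂⁻¹ = w⁻¹ := by simp only [w, mul_inv_rev, mul_assoc]
  have hτw : τ ^ 2 * w = w * (τ * (σ₃ * σ₄) * (σ₄ * σ₃)) := by
    rw [hτ, braid_tau_sq_mul h12 h23 h34 h13 h14 h24]; simp only [w, mul_assoc]
  have hconj : w⁻¹ * (z * τ ^ 2) * w = z * τ * (σ₃ * σ₄) * (σ₄ * σ₃) := by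
    calc w⁻¹ * (z * τ ^ 2) * w = w⁻¹ * (z * (w * (τ * (σ₃ * σ₄) * (σ₄ * σ₃)))) := by
          rw [← hτw]; simp only [mul_assoc]
      _ = z * τ * (σ₃ * σ₄) * (σ₄ * σ₃) := by
          rw [Commute.left_comm (hz w), inv_mul_cancel_left]; simp only [mul_assoc]
  refine ⟨hw ▸ hconj, isConj_iff.mpr ⟨w⁻¹, ?_⟩⟩
  rwa [inv_inv]
end

section
/- Let G be a group, z a central element of G, and σ₁,…,σ_{2n} elements of G satisfying the braid relations of B_{2n+1}, with τ = σ₁⋯σ_{2n}. Then for n ≥ 1, the element zτ(σ_{n+1}σ_{n+2}⋯σ_{2n})(σ_{2n}σ_{2n−1}⋯σ_{n+1}) is conjugate in G to zτ². -/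
/-!
Index the generators from `0`, so that `τ = σ₀ ⋯ σ_{2n-1}`, and let
`g = ∏_{c<n} σ_{2c+1} ⋯ σ_{c+1}`, with `g'` the same product with every index lowered by one.
Conjugation by a block `σ_a ⋯ σ_b` raises the index of every letter `σ_i` with `a ≤ i < b` by one;
in particular `τ g' = g τ`. Building `g` one factor at a time and using the sliding identity
`(σ_a ⋯ σ_{a+e+1}) (σ_{a+e-1} ⋯ σ_a) = (σ_{a+e} ⋯ σ_a) (σ_{a+1} ⋯ σ_{a+e+1})`
one gets `τ g = g' I D` with `I = σ_n ⋯ σ_{2n-1}` and `D = σ_{2n-1} ⋯ σ_n`. Hence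
`τ² g = τ g' I D = g τ I D`, and the central factor `z` goes along for free.
-/

section Braid

variable {G : Type*} [Group G]

structure BraidRelations (σ : ℕ → G) (N : ℕ) : Prop where
  braid : ∀ i, i + 2 ≤ N → σ i * σ (i + 1) * σ i = σ (i + 1) * σ i * σ (i + 1)
  comm : ∀ i j, i + 2 ≤ j → j < N → σ i * σ j = σ j * σ i

def ascProd (σ : ℕ → G) (a k : ℕ) : G :=
  ((List.range k).map fun i => σ (a + i)).prod

def descProd (σ : ℕ → G) (a k : ℕ) : G :=
  ((List.range k).reverse.map fun i => σ (a + i)).prod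

def staircase (σ : ℕ → G) (a m : ℕ) : G :=
  ((List.range m).map fun c => descProd σ (a + c) (c + 1)).prod

variable {σ : ℕ → G} {N a b e i k m : ℕ}

@[simp]
theorem ascProd_zero : ascProd σ a 0 = 1 := rfl

@[simp]
theorem descProd_zero : descProd σ a 0 = 1 := rfl

@[simp]
theorem staircase_zero : staircase σ a 0 = 1 := rfl

theorem ascProd_succ : ascProd σ a (k + 1) = ascProd σ a k * σ (a + k) := by
  simp [ascProd, List.range_succ]

theorem ascProd_add (j : ℕ) : ascProd σ a (j + k) = ascProd σ a j * ascProd σ (a + j) k := by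
  simp [ascProd, List.range_add, Function.comp_def, add_assoc]

theorem ascProd_succ' : ascProd σ a (k + 1) = σ a * ascProd σ (a + 1) k := by
  rw [add_comm k, ascProd_add]
  simp [ascProd]

theorem descProd_succ : descProd σ a (k + 1) = σ (a + k) * descProd σ a k := by
  simp [descProd, List.range_succ]

theorem descProd_succ' : descProd σ a (k + 1) = descProd σ (a + 1) k * σ a := by
  simp [descProd, List.range_succ_eq_map, Function.comp_def, add_assoc, add_comm 1]

theorem staircase_succ : staircase σ a (m + 1) = staircase σ a m * descProd σ (a + m) (m + 1) := by
  simp [staircase, List.range_succ]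

namespace BraidRelations

theorem commute_ascProd (h : BraidRelations σ N) (hia : i + 2 ≤ a) (hak : a + k ≤ N) :
    Commute (σ i) (ascProd σ a k) :=
  Commute.list_prod_right _ _ <| by
    simp only [List.mem_map, List.mem_range]
    rintro _ ⟨j, hj, rfl⟩
    exact h.comm i (a + j) (by omega) (by omega)

theorem ascProd_commute (h : BraidRelations σ N) (hai : a + k < i) (hi : i < N) :
    Commute (ascProd σ a k) (σ i) :=
  Commute.list_prod_left _ _ <| by
    simp only [List.mem_map, List.mem_range]
    rintro _ ⟨j, hj, rfl⟩
    exact h.comm (a + j) i (by omega) hi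

theorem descProd_commute (h : BraidRelations σ N) (hai : a + k < i) (hi : i < N) :
    Commute (descProd σ a k) (σ i) :=
  Commute.list_prod_left _ _ <| by
    simp only [List.mem_map, List.mem_reverse, List.mem_range]
    rintro _ ⟨j, hj, rfl⟩
    exact h.comm (a + j) i (by omega) hi

theorem staircase_commute (h : BraidRelations σ N) (hai : a + 2 * m ≤ i) (hi : i < N) :
    Commute (staircase σ a m) (σ i) :=
  Commute.list_prod_left _ _ <| by
    simp only [List.mem_map, List.mem_range]
    rintro _ ⟨c, hc, rfl⟩
    exact h.descProd_commute (by omega) hi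

theorem semiconjBy_ascProd (h : BraidRelations σ N) (hai : a ≤ i) (hik : i + 2 ≤ a + k)
    (hak : a + k ≤ N) : SemiconjBy (ascProd σ a k) (σ i) (σ (i + 1)) := by
  obtain ⟨r, rfl⟩ : ∃ r, k = (i - a) + 2 + r := ⟨k - (i - a) - 2, by omega⟩
  have hsplit : ascProd σ a (i - a + 2 + r) =
      ascProd σ a (i - a) * (σ i * σ (i + 1)) * ascProd σ (i + 2) r := by
    rw [ascProd_add, ascProd_add, show a + (i - a) = i by omega,
      show a + (i - a + 2) = i + 2 by omega]
    simp [ascProd, List.range_succ, mul_assoc]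
  have hright : Commute (σ i) (ascProd σ (i + 2) r) := h.commute_ascProd le_rfl (by omega)
  have hleft : Commute (ascProd σ a (i - a)) (σ (i + 1)) := h.ascProd_commute (by omega) (by omega)
  rw [SemiconjBy, hsplit]
  calc ascProd σ a (i - a) * (σ i * σ (i + 1)) * ascProd σ (i + 2) r * σ i
      = ascProd σ a (i - a) * (σ i * σ (i + 1) * σ i) * ascProd σ (i + 2) r := by
        rw [mul_assoc _ (ascProd σ (i + 2) r), ← hright.eq]; group
    _ = ascProd σ a (i - a) * σ (i + 1) * (σ i * σ (i + 1)) * ascProd σ (i + 2) r := by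
        rw [h.braid i (by omega)]; group
    _ = σ (i + 1) * (ascProd σ a (i - a) * (σ i * σ (i + 1)) * ascProd σ (i + 2) r) := by
        rw [hleft.eq]; group

theorem semiconjBy_ascProd_descProd (h : BraidRelations σ N) (hab : a ≤ b)
    (hbe : b + e + 1 ≤ a + k) (hak : a + k ≤ N) :
    SemiconjBy (ascProd σ a k) (descProd σ b e) (descProd σ (b + 1) e) := by
  induction e with
  | zero => exact SemiconjBy.one_right _
  | succ e ih =>
    rw [descProd_succ, descProd_succ, add_right_comm]
    exact (h.semiconjBy_ascProd (by omega) (by omega) hak).mul_right (ih (by omega))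

theorem semiconjBy_ascProd_staircase (h : BraidRelations σ N) (hm : a + 2 * m ≤ N) :
    SemiconjBy (ascProd σ 0 N) (staircase σ a m) (staircase σ (a + 1) m) := by
  induction m with
  | zero => exact SemiconjBy.one_right _
  | succ m ih =>
    rw [staircase_succ, staircase_succ, add_right_comm]
    exact (ih (by omega)).mul_right
      (h.semiconjBy_ascProd_descProd (Nat.zero_le _) (by omega) (by omega))

theorem ascProd_mul_descProd (h : BraidRelations σ N) (hae : a + e + 2 ≤ N) :
    ascProd σ a (e + 2) * descProd σ a e = descProd σ a (e + 1) * ascProd σ (a + 1) (e + 1) := by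
  rw [(h.semiconjBy_ascProd_descProd le_rfl (by omega) (by omega)).eq, ascProd_succ',
    descProd_succ', mul_assoc]

theorem ascProd_mul_staircase (h : BraidRelations σ N) {t : ℕ} (ht : 2 * t + 2 ≤ N) :
    ascProd σ 0 (2 * t + 2) * staircase σ 1 t =
      staircase σ 0 (t + 1) * ascProd σ (t + 1) (t + 1) := by
  induction t with
  | zero => simp [ascProd, staircase, descProd, List.range_succ]
  | succ t ih =>
    have hτ : ascProd σ 0 (2 * (t + 1) + 2) =
        ascProd σ 0 (2 * t + 2) * σ (2 * t + 2) * σ (2 * t + 3) := by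
      rw [show 2 * (t + 1) + 2 = 2 * t + 2 + 1 + 1 by omega, ascProd_succ, ascProd_succ]
      simp only [zero_add]
    have hI : ascProd σ (t + 1) (t + 1) * σ (2 * t + 2) * σ (2 * t + 3) =
        ascProd σ (t + 1) (t + 1 + 2) := by
      rw [show t + 1 + 2 = t + 1 + 1 + 1 from rfl, ascProd_succ (k := t + 1 + 1),
        ascProd_succ (k := t + 1),
        show t + 1 + (t + 1) = 2 * t + 2 by omega, show t + 1 + (t + 1 + 1) = 2 * t + 3 by omega]
    have hcomm : σ (2 * t + 2) * σ (2 * t + 3) * staircase σ 1 t =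
        staircase σ 1 t * (σ (2 * t + 2) * σ (2 * t + 3)) :=
      (((h.staircase_commute (by omega) (by omega)).mul_right
        (h.staircase_commute (by omega) (by omega))).eq).symm
    calc ascProd σ 0 (2 * (t + 1) + 2) * staircase σ 1 (t + 1)
        = ascProd σ 0 (2 * t + 2) * (σ (2 * t + 2) * σ (2 * t + 3) * staircase σ 1 t) *
            descProd σ (t + 1) (t + 1) := by
          rw [hτ, staircase_succ, add_comm 1 t]; group
      _ = ascProd σ 0 (2 * t + 2) * staircase σ 1 t *
            (σ (2 * t + 2) * σ (2 * t + 3) * descProd σ (t + 1) (t + 1)) := by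
          rw [hcomm]; group
      _ = staircase σ 0 (t + 1) *
            (ascProd σ (t + 1) (t + 1 + 2) * descProd σ (t + 1) (t + 1)) := by
          rw [ih (by omega), ← hI]; group
      _ = staircase σ 0 (t + 1 + 1) * ascProd σ (t + 1 + 1) (t + 1 + 1) := by
          rw [h.ascProd_mul_descProd (by omega), staircase_succ (m := t + 1), zero_add,
            mul_assoc]

theorem semiconjBy_staircase {n : ℕ} (h : BraidRelations σ (2 * n)) :
    SemiconjBy (staircase σ 1 n) (ascProd σ 0 (2 * n) * ascProd σ n n * descProd σ n n)
      (ascProd σ 0 (2 * n) ^ 2) := by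
  set τ := ascProd σ 0 (2 * n)
  have hcol : τ * staircase σ 1 n = staircase σ 0 n * ascProd σ n n * descProd σ n n := by
    cases n with
    | zero => simp [τ]
    | succ t =>
      rw [staircase_succ, ← mul_assoc, show τ = ascProd σ 0 (2 * t + 2) by rfl,
        h.ascProd_mul_staircase (by omega), add_comm 1 t]
  have hshift : τ * staircase σ 0 n = staircase σ 1 n * τ :=
    h.semiconjBy_ascProd_staircase (by omega)
  calc staircase σ 1 n * (τ * ascProd σ n n * descProd σ n n)
      = τ * (τ * staircase σ 1 n) := by
        rw [hcol]; simp only [← mul_assoc]; rw [hshift]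
    _ = τ ^ 2 * staircase σ 1 n := by rw [sq, mul_assoc]

end BraidRelations

end Braid

theorem lemma_conjugate_general {G : Type*} [Group G] (n : ℕ)
    (z : G) (hz : ∀ g : G, z * g = g * z) (σ : ℕ → G)
    (hbr1 : ∀ i, 1 ≤ i → i + 1 ≤ 2 * n →
      σ i * σ (i + 1) * σ i = σ (i + 1) * σ i * σ (i + 1))
    (hbr2 : ∀ i j, 1 ≤ i → i ≤ 2 * n → 1 ≤ j → j ≤ 2 * n → i + 2 ≤ j →
      σ i * σ j = σ j * σ i)
    (τ : G) (hτ : τ = ((List.range (2 * n)).map (fun i => σ (i + 1))).prod) :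
    IsConj (z * τ ^ 2)
      (z * τ * ((List.range n).map (fun j => σ (n + 1 + j))).prod *
        ((List.range n).map (fun j => σ (2 * n - j))).prod) := by
  set σ' : ℕ → G := fun i => σ (i + 1)
  have hσ' : BraidRelations σ' (2 * n) :=
    ⟨fun i hi => hbr1 (i + 1) (by omega) (by omega),
      fun i j hij hj => hbr2 (i + 1) (j + 1) (by omega) (by omega) (by omega) (by omega) (by omega)⟩
  have hτ' : τ = ascProd σ' 0 (2 * n) := by simp [hτ, ascProd, σ']
  have hI : ((List.range n).map fun j => σ (n + 1 + j)).prod = ascProd σ' n n := by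
    simp only [ascProd, σ', add_right_comm n 1]
  have hD : ((List.range n).map fun j => σ (2 * n - j)).prod = descProd σ' n n := by
    rw [descProd, List.range_eq_range', List.reverse_range', ← List.range_eq_range', List.map_map]
    refine congrArg _ (List.map_congr_left fun j hj => ?_)
    simp only [List.mem_range] at hj
    simp only [Function.comp_apply, σ']
    congr 1
    omega
  rw [hI, hD, hτ', mul_assoc z, mul_assoc z]
  exact IsConj.symm ⟨toUnits (staircase σ' 1 n),
    SemiconjBy.mul_right (hz _).symm hσ'.semiconjBy_staircase⟩

/-- Abstract form of Lemma 3.1: for z central and σ₁,…,σ_{2n} satisfying the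
braid relations of B_{2n+1}, with τ = σ₁⋯σ_{2n}, the element
zτ(σ_{n+1}⋯σ_{2n})(σ_{2n}⋯σ_{n+1}) is conjugate to zτ². -/
theorem lemma_conjugate {G : Type*} [Group G] (n : ℕ) (hn : 1 ≤ n)
    (z : G) (hz : ∀ g : G, z * g = g * z) (σ : ℕ → G)
    (hbr1 : ∀ i, 1 ≤ i → i + 1 ≤ 2 * n →
      σ i * σ (i + 1) * σ i = σ (i + 1) * σ i * σ (i + 1))
    (hbr2 : ∀ i j, 1 ≤ i → i ≤ 2 * n → 1 ≤ j → j ≤ 2 * n → i + 2 ≤ j →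
      σ i * σ j = σ j * σ i)
    (τ : G) (hτ : τ = ((List.range (2 * n)).map (fun i => σ (i + 1))).prod) :
    IsConj (z * τ ^ 2)
      (z * τ * ((List.range n).map (fun j => σ (n + 1 + j))).prod *
        ((List.range n).map (fun j => σ (2 * n - j))).prod) :=
  lemma_conjugate_general n z hz σ hbr1 hbr2 τ hτ
end

section
/- Let G be a group, z central in G, σ₁,…,σ_{2n} satisfying the braid relations of B_{2n+1}, τ = σ₁⋯σ_{2n}, and for 1 ≤ k ≤ n define c_k = σ_{k+1}σ_{k+3}⋯σ_{2n−k+1} (indices increasing by 2) and β_k inductively by β₀ = zτ² and β_k = c_k⁻¹β_{k−1}c_k. Then for all 1 ≤ k ≤ n, β_k = zτ(σ_k⁻¹σ_{k−1}⁻¹⋯σ₁⁻¹)τ(σ_{2n}σ_{2n−1}⋯σ_{2n−k+1}). -/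
/-!
By the braid relations, conjugation by `τ = σ₁ ⋯ σ₂ₙ` shifts each `σᵢ` with `i < 2n` to
`σᵢ₊₁`. So for `β_k = zτAτB` and `c = c_{k+1} = σ_{k+2} σ_{k+4} ⋯ σ_{2n-k}`, the factor `c⁻¹`
passes the first `τ` as `(σ_{k+1} e)⁻¹` with `e = σ_{k+3} ⋯ σ_{2n-k-1}`; `σ_{k+1}⁻¹` is absorbed
into `A`, while `e⁻¹` commutes past `A` and passes the second `τ` as `f⁻¹` with
`f = σ_{k+2} ⋯ σ_{2n-k-2}`. Then `f` commutes with `B` and cancels against `c = f σ_{2n-k}`,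
so the surviving `σ_{2n-k}` extends `B`.
-/

section Monoid

variable {G : Type*} [Monoid G]

theorem semiconjBy_list_prod_map {ι : Type*} {a : G} {f g : ι → G} {l : List ι}
    (h : ∀ i ∈ l, SemiconjBy a (f i) (g i)) :
    SemiconjBy a (l.map f).prod (l.map g).prod := by
  induction l with
  | nil => exact SemiconjBy.one_right a
  | cons i l ih =>
    simp only [List.map_cons, List.prod_cons]
    exact (h i List.mem_cons_self).mul_right (ih fun j hj => h j (List.mem_cons_of_mem i hj))

theorem commute_list_prod_map {ι : Type*} {x : G} {f : ι → G} {l : List ι}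
    (h : ∀ i ∈ l, Commute x (f i)) : Commute x (l.map f).prod :=
  Commute.list_prod_right _ _ fun _ hy => by
    obtain ⟨i, hi, rfl⟩ := List.mem_map.1 hy
    exact h i hi

theorem commute_list_prod_map_list_prod_map {ι κ : Type*} {f : ι → G} {g : κ → G}
    {l : List ι} {l' : List κ} (h : ∀ i ∈ l, ∀ j ∈ l', Commute (f i) (g j)) :
    Commute (l.map f).prod (l'.map g).prod :=
  commute_list_prod_map fun j hj => (commute_list_prod_map fun i hi => (h i hi j hj).symm).symm

def BraidRel (m : ℕ) (σ : ℕ → G) : Prop :=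
  ∀ i, 1 ≤ i → i + 1 ≤ m → σ i * σ (i + 1) * σ i = σ (i + 1) * σ i * σ (i + 1)

def FarCommRel (m : ℕ) (σ : ℕ → G) : Prop :=
  ∀ i j, 1 ≤ i → i ≤ m → 1 ≤ j → j ≤ m → i + 2 ≤ j → σ i * σ j = σ j * σ i

theorem FarCommRel.commute {m : ℕ} {σ : ℕ → G} (h : FarCommRel m σ) {i j : ℕ}
    (hi : 1 ≤ i) (hj : j ≤ m) (hij : i + 2 ≤ j) : Commute (σ i) (σ j) :=
  h i j hi (by omega) (by omega) hj hij

def braidProd (σ : ℕ → G) (m : ℕ) : G :=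
  ((List.range m).map (fun i => σ (i + 1))).prod

theorem braidProd_add_two_add (σ : ℕ → G) (p r : ℕ) :
    braidProd σ (p + 2 + r) =
      braidProd σ p * (σ (p + 1) * σ (p + 2)) *
        ((List.range r).map (fun i => σ (p + 3 + i))).prod := by
  rw [braidProd, List.range_add, @List.range_add p 2]
  simp only [List.map_append, List.prod_append, List.map_map, Function.comp_def]
  congr 2
  · simp [List.range_succ, add_assoc]
  · exact List.map_congr_left fun i _ => congrArg σ (by omega)

theorem semiconjBy_braidProd {m : ℕ} {σ : ℕ → G} (hbr : BraidRel m σ) (hfar : FarCommRel m σ)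
    {i : ℕ} (hi : 1 ≤ i) (him : i < m) : SemiconjBy (braidProd σ m) (σ i) (σ (i + 1)) := by
  obtain ⟨p, rfl⟩ : ∃ p, i = p + 1 := ⟨i - 1, by omega⟩
  obtain ⟨r, rfl⟩ : ∃ r, m = p + 2 + r := ⟨m - (p + 2), by omega⟩
  rw [braidProd_add_two_add]
  have hbraid : SemiconjBy (σ (p + 1) * σ (p + 2)) (σ (p + 1)) (σ (p + 2)) := by
    simpa only [SemiconjBy, ← mul_assoc] using hbr (p + 1) (by omega) (by omega)
  have hleft : Commute (σ (p + 2)) (braidProd σ p) :=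
    commute_list_prod_map fun j hj =>
      (hfar.commute (by omega) (by omega) (by simp at hj; omega)).symm
  have hright : Commute (σ (p + 1)) ((List.range r).map (fun i => σ (p + 3 + i))).prod :=
    commute_list_prod_map fun j hj => hfar.commute (by omega) (by simp at hj; omega) (by omega)
  exact (hleft.symm.semiconjBy.mul_left hbraid).mul_left hright.symm.semiconjBy

def skipProd (σ : ℕ → G) (a m : ℕ) : G :=
  ((List.range m).map (fun j => σ (a + 2 * j))).prod

theorem skipProd_succ (σ : ℕ → G) (a m : ℕ) :
    skipProd σ a (m + 1) = σ a * skipProd σ (a + 2) m := by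
  simp only [skipProd, List.range_succ_eq_map, List.map_cons, List.map_map, List.prod_cons]
  exact congrArg _ (congrArg _ (List.map_congr_left fun j _ => congrArg σ (by simp; omega)))

theorem skipProd_succ' (σ : ℕ → G) (a m : ℕ) :
    skipProd σ a (m + 1) = skipProd σ a m * σ (a + 2 * m) := by
  simp [skipProd, List.range_succ]

theorem semiconjBy_braidProd_skipProd {M : ℕ} {σ : ℕ → G} (hbr : BraidRel M σ)
    (hfar : FarCommRel M σ) {a m : ℕ} (ha : 1 ≤ a) (hm : a + 2 * m ≤ M + 1) :
    SemiconjBy (braidProd σ M) (skipProd σ a m) (skipProd σ (a + 1) m) :=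
  semiconjBy_list_prod_map fun j hj => by
    rw [show a + 1 + 2 * j = a + 2 * j + 1 by omega]
    exact semiconjBy_braidProd hbr hfar (by omega) (by simp at hj; omega)

end Monoid

section Group

variable {G : Type*} [Group G]

theorem conj_mul_mul_mul_eq {τ A B c s e f t : G} (hc : SemiconjBy τ (s * e) c)
    (he : SemiconjBy τ f e) (hcf : c = f * t) (heA : Commute e (s⁻¹ * A)) (hfB : Commute f B) :
    c⁻¹ * (τ * A * τ * B) * c = τ * (s⁻¹ * A) * τ * (B * t) :=
  calc c⁻¹ * (τ * A * τ * B) * c = (c⁻¹ * τ) * A * τ * B * (f * t) := by rw [← hcf]; group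
    _ = τ * (e⁻¹ * (s⁻¹ * A)) * τ * B * (f * t) := by rw [← hc.inv_right.eq]; group
    _ = τ * (s⁻¹ * A) * (e⁻¹ * τ) * B * f * t := by rw [heA.inv_left.eq]; group
    _ = τ * (s⁻¹ * A) * τ * (f⁻¹ * (B * f)) * t := by rw [← he.inv_right.eq]; group
    _ = τ * (s⁻¹ * A) * τ * (B * t) := by rw [← hfB.eq]; group

/-- `σₖ⁻¹ σₖ₋₁⁻¹ ⋯ σ₁⁻¹`. -/
def invDownProd (σ : ℕ → G) (k : ℕ) : G :=
  ((List.range k).map (fun j => (σ (k - j))⁻¹)).prod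

/-- `σₘ σₘ₋₁ ⋯ σₘ₋ₖ₊₁`. -/
def downProd (σ : ℕ → G) (m k : ℕ) : G :=
  ((List.range k).map (fun j => σ (m - j))).prod

theorem invDownProd_succ (σ : ℕ → G) (k : ℕ) :
    invDownProd σ (k + 1) = (σ (k + 1))⁻¹ * invDownProd σ k := by
  simp only [invDownProd, List.range_succ_eq_map, List.map_cons, List.map_map, List.prod_cons,
    Nat.sub_zero, Function.comp_def, Nat.succ_sub_succ]

theorem downProd_succ (σ : ℕ → G) (m k : ℕ) :
    downProd σ m (k + 1) = downProd σ m k * σ (m - k) := by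
  simp [downProd, List.range_succ]

theorem conj_skipProd_braidProd {n k : ℕ} {σ : ℕ → G} (hbr : BraidRel (2 * n) σ)
    (hfar : FarCommRel (2 * n) σ) (hk : k < n) :
    (skipProd σ (k + 2) (n - k))⁻¹ *
        (braidProd σ (2 * n) * invDownProd σ k * braidProd σ (2 * n) * downProd σ (2 * n) k) *
        skipProd σ (k + 2) (n - k) =
      braidProd σ (2 * n) * invDownProd σ (k + 1) * braidProd σ (2 * n) *
        downProd σ (2 * n) (k + 1) := by
  obtain ⟨r, hr⟩ : ∃ r, n - k = r + 1 := ⟨n - k - 1, by omega⟩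
  rw [invDownProd_succ, downProd_succ, hr]
  refine conj_mul_mul_mul_eq (e := skipProd σ (k + 3) r) (f := skipProd σ (k + 2) r) ?_
    (semiconjBy_braidProd_skipProd hbr hfar (by omega) (by omega)) ?_ ?_ ?_
  · rw [← skipProd_succ]
    exact semiconjBy_braidProd_skipProd hbr hfar (by omega) (by omega)
  · rw [skipProd_succ', show k + 2 + 2 * r = 2 * n - k by omega]
  · rw [← invDownProd_succ]
    exact commute_list_prod_map_list_prod_map fun i hi j hj =>
      (hfar.commute (by simp at hj; omega) (by simp at hi; omega)
        (by simp at hi hj; omega)).symm.inv_right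
  · exact commute_list_prod_map_list_prod_map fun i hi j hj =>
      hfar.commute (by omega) (by omega) (by simp at hi hj; omega)

end Group

theorem beta_formula_general {G : Type*} [Group G] (n : ℕ)
    (z : G) (hz : ∀ g : G, z * g = g * z) (σ : ℕ → G)
    (hbr1 : ∀ i, 1 ≤ i → i + 1 ≤ 2 * n →
      σ i * σ (i + 1) * σ i = σ (i + 1) * σ i * σ (i + 1))
    (hbr2 : ∀ i j, 1 ≤ i → i ≤ 2 * n → 1 ≤ j → j ≤ 2 * n → i + 2 ≤ j →
      σ i * σ j = σ j * σ i)
    (τ : G) (hτ : τ = ((List.range (2 * n)).map (fun i => σ (i + 1))).prod)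
    (c : ℕ → G)
    (hc : ∀ k, 1 ≤ k → k ≤ n →
      c k = ((List.range (n - k + 1)).map (fun j => σ (k + 1 + 2 * j))).prod)
    (β : ℕ → G) (hβ0 : β 0 = z * τ ^ 2)
    (hβ : ∀ k, 1 ≤ k → k ≤ n → β k = (c k)⁻¹ * β (k - 1) * c k) :
    ∀ k, 1 ≤ k → k ≤ n →
      β k = z * τ * ((List.range k).map (fun j => (σ (k - j))⁻¹)).prod * τ *
        ((List.range k).map (fun j => σ (2 * n - j))).prod := by
  have hτ' : τ = braidProd σ (2 * n) := hτ
  have hc' : ∀ k < n, c (k + 1) = skipProd σ (k + 2) (n - k) := fun k hk => by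
    rw [hc (k + 1) (by omega) hk, show n - (k + 1) + 1 = n - k by omega]; rfl
  suffices key : ∀ k ≤ n, β k = z * (τ * invDownProd σ k * τ * downProd σ (2 * n) k) by
    intro k _ hk
    rw [key k hk]
    simp only [invDownProd, downProd, mul_assoc]
  intro k
  induction k with
  | zero => intro _; simp [hβ0, sq, invDownProd, downProd]
  | succ k ih =>
    intro hk
    rw [hβ (k + 1) (by omega) hk, Nat.add_sub_cancel, ih (by omega), hc' k hk, hτ',
      ← conj_skipProd_braidProd hbr1 hbr2 hk, ← mul_assoc _ z, ← hz]
    simp only [mul_assoc]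

/-- The inductive computation in the proof of Lemma 3.1: with z central,
σ₁,…,σ_{2n} satisfying the braid relations, τ = σ₁⋯σ_{2n},
c_k = σ_{k+1}σ_{k+3}⋯σ_{2n−k+1}, β₀ = zτ² and β_k = c_k⁻¹ β_{k−1} c_k,
one has β_k = zτ(σ_k⁻¹⋯σ₁⁻¹)τ(σ_{2n}⋯σ_{2n−k+1}) for 1 ≤ k ≤ n. -/
theorem beta_formula {G : Type*} [Group G] (n : ℕ) (hn : 1 ≤ n)
    (z : G) (hz : ∀ g : G, z * g = g * z) (σ : ℕ → G)
    (hbr1 : ∀ i, 1 ≤ i → i + 1 ≤ 2 * n →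
      σ i * σ (i + 1) * σ i = σ (i + 1) * σ i * σ (i + 1))
    (hbr2 : ∀ i j, 1 ≤ i → i ≤ 2 * n → 1 ≤ j → j ≤ 2 * n → i + 2 ≤ j →
      σ i * σ j = σ j * σ i)
    (τ : G) (hτ : τ = ((List.range (2 * n)).map (fun i => σ (i + 1))).prod)
    (c : ℕ → G)
    (hc : ∀ k, 1 ≤ k → k ≤ n →
      c k = ((List.range (n - k + 1)).map (fun j => σ (k + 1 + 2 * j))).prod)
    (β : ℕ → G) (hβ0 : β 0 = z * τ ^ 2)
    (hβ : ∀ k, 1 ≤ k → k ≤ n → β k = (c k)⁻¹ * β (k - 1) * c k) :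
    ∀ k, 1 ≤ k → k ≤ n →
      β k = z * τ * ((List.range k).map (fun j => (σ (k - j))⁻¹)).prod * τ *
        ((List.range k).map (fun j => σ (2 * n - j))).prod :=
  beta_formula_general n z hz σ hbr1 hbr2 τ hτ c hc β hβ0 hβ
end

section
/- For any positive integer n, the sequence ([1, 3n+4], [n+2, 3n+3], [n+1, 3n+2], …, [2, 2n+3], [4n+5, 2n+2], [4n+4, 2n+1], …, [3n+6, n+3], 3n+5) described in the paper is a permutation of {1, 2, …, 4n+5}; i.e., the 4n+5 listed entries are pairwise distinct and cover {1,…,4n+5}. -/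
/-!
Each paired block interleaves two decreasing runs of consecutive integers. Un-interleaving and
reversing them, the sequence becomes a rearrangement of the intervals
`{1}, [2, n+2], [n+3, 2n+2], [2n+3, 3n+3], {3n+4}, {3n+5}, [3n+6, 4n+5]`,
which tile `[1, 4n+5]`.
-/

/-- The petal permutation sequence of T_{2n+1,2n+3} from the paper:
(1, 3n+4, n+2, 3n+3, n+1, 3n+2, …, 2, 2n+3, 4n+5, 2n+2, 4n+4, 2n+1, …,
3n+6, n+3, 3n+5). -/
def petalSeq (n : ℕ) : List ℕ :=
  [1, 3 * n + 4] ++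
    ((List.range (n + 1)).flatMap (fun j => [n + 2 - j, 3 * n + 3 - j])) ++
    ((List.range n).flatMap (fun j => [4 * n + 5 - j, 2 * n + 2 - j])) ++
    [3 * n + 5]

namespace List

theorem flatMap_pair_perm {α β : Type*} (l : List α) (f g : α → β) :
    (l.flatMap fun a => [f a, g a]) ~ l.map f ++ l.map g := by
  simpa [← map_eq_flatMap] using (map_append_flatMap_perm l f fun a => [g a]).symm

theorem map_range_tsub_perm_range' {a k : ℕ} (hk : k ≤ a + 1) :
    (range k).map (a - ·) ~ range' (a + 1 - k) k := by
  have : a + 1 - k + k - 1 = a := by omega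
  simpa [reverse_range', this] using reverse_perm (range' (a + 1 - k) k)

theorem flatMap_range_tsub_pair_perm {a b k : ℕ} (ha : k ≤ a + 1) (hb : k ≤ b + 1) :
    ((range k).flatMap fun j => [a - j, b - j]) ~ range' (a + 1 - k) k ++ range' (b + 1 - k) k :=
  (flatMap_pair_perm _ _ _).trans
    ((map_range_tsub_perm_range' ha).append (map_range_tsub_perm_range' hb))

end List

open List

theorem range'_one_eq_petal_blocks (n : ℕ) :
    range' 1 (4 * n + 5) = [1] ++ range' 2 (n + 1) ++ range' (n + 3) n ++
      range' (2 * n + 3) (n + 1) ++ [3 * n + 4] ++ [3 * n + 5] ++ range' (3 * n + 6) n := by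
  rw [show 4 * n + 5 = 1 + (n + 1) + n + (n + 1) + 1 + 1 + n by omega]
  simp only [← range'_append, one_mul, range'_one]
  ring_nf

theorem petalSeq_perm_range' (n : ℕ) : petalSeq n ~ range' 1 (4 * n + 5) := by
  have hB : ((range (n + 1)).flatMap fun j => [n + 2 - j, 3 * n + 3 - j]) ~
      range' 2 (n + 1) ++ range' (2 * n + 3) (n + 1) := by
    convert flatMap_range_tsub_pair_perm (a := n + 2) (b := 3 * n + 3) (k := n + 1)
      (by omega) (by omega) using 3 <;> omega
  have hC : ((range n).flatMap fun j => [4 * n + 5 - j, 2 * n + 2 - j]) ~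
      range' (3 * n + 6) n ++ range' (n + 3) n := by
    convert flatMap_range_tsub_pair_perm (a := 4 * n + 5) (b := 2 * n + 2) (k := n)
      (by omega) (by omega) using 3 <;> omega
  refine ((((Perm.refl _).append hB).append hC).append (.refl _)).trans ?_
  rw [range'_one_eq_petal_blocks, ← Multiset.coe_eq_coe, ← singleton_append]
  simp only [← Multiset.coe_add]
  abel

theorem petalSeq_perm_general (n : ℕ) :
    (petalSeq n).Nodup ∧ ∀ m, m ∈ petalSeq n ↔ 1 ≤ m ∧ m ≤ 4 * n + 5 := by
  have h := petalSeq_perm_range' n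
  refine ⟨h.nodup_iff.2 nodup_range', fun m => ?_⟩
  rw [h.mem_iff, mem_range'_1]
  omega

/-- For any positive integer n, the petal permutation sequence is a genuine
permutation of {1, 2, …, 4n+5}: its entries are pairwise distinct and it
covers {1,…,4n+5}. -/
theorem petalSeq_perm (n : ℕ) (hn : 1 ≤ n) :
    (petalSeq n).Nodup ∧ ∀ m, m ∈ petalSeq n ↔ 1 ≤ m ∧ m ≤ 4 * n + 5 :=
  petalSeq_perm_general n
end

section
/- For any positive integer n, the petal permutation of T_{2n+1,2n+3} given in the paper, viewed as a cyclic sequence of the odd length 4n+5, alternates in parity of position level: consecutive entries in the sequence always differ by more than 1 in absolute value (no two adjacent petals have adjacent levels). -/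
namespace List

variable {α : Type*} {R : α → α → Prop}

theorem isChain_cons_flatMap_range_pair_append {a : α} {f g : ℕ → α} {l : List α} (m : ℕ)
    (ha : R a (f 0)) (hfg : ∀ j ≤ m, R (f j) (g j)) (hgf : ∀ j < m, R (g j) (f (j + 1)))
    (hl : IsChain R (g m :: l)) :
    IsChain R (a :: (range (m + 1)).flatMap (fun j => [f j, g j]) ++ l) := by
  induction m generalizing a f g with
  | zero => simpa using ⟨ha, hfg 0 le_rfl, hl⟩
  | succ m ih =>
    rw [range_succ_eq_map, flatMap_cons, flatMap_map]
    refine isChain_cons_cons.mpr ⟨ha, isChain_cons_cons.mpr ⟨hfg 0 (m + 1).zero_le, ?_⟩⟩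
    exact ih (hgf 0 m.succ_pos) (fun j _ => hfg (j + 1) (by omega))
      (fun j _ => hgf (j + 1) (by omega)) hl

theorem rel_getD_succ_mod_length {l : List α} (h : IsChain R (l ++ l.take 1)) (d : α)
    {i : ℕ} (hi : i < l.length) : R (l.getD i d) (l.getD ((i + 1) % l.length) d) := by
  have hlen : (l ++ l.take 1).length = l.length + 1 := by simp only [length_append, length_take]; omega
  have hrel := isChain_iff_getElem.mp h i (by omega)
  rw [getElem_append_left hi] at hrel
  rw [getD_eq_getElem _ _ hi]
  rcases Nat.lt_or_ge (i + 1) l.length with hlt | hge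
  · rwa [Nat.mod_eq_of_lt hlt, getD_eq_getElem _ _ hlt, ← getElem_append_left hlt]
  · have hlast : i + 1 = l.length := by omega
    rw [hlast, Nat.mod_self, getD_eq_getElem _ _ (by omega)]
    simpa [hlast] using hrel

end List

theorem length_petalSeq (n : ℕ) : (petalSeq n).length = 4 * n + 5 := by
  simp only [petalSeq, List.length_append, List.length_cons, List.length_nil, List.length_flatMap,
    List.map_const', List.length_range, List.sum_replicate, smul_eq_mul]
  omega

theorem isChain_petalSeq_append_take_one (n : ℕ) (hn : 1 ≤ n) :
    (petalSeq n ++ (petalSeq n).take 1).IsChain (fun a b : ℕ => 2 ≤ |(a : ℤ) - b|) := by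
  have far : ∀ a b : ℕ, a + 2 ≤ b ∨ b + 2 ≤ a → 2 ≤ |(a : ℤ) - b| := by
    intro a b h
    rw [le_abs]; omega
  obtain ⟨k, rfl⟩ := Nat.exists_eq_add_of_le' hn
  simp only [petalSeq, List.take, List.append_assoc, List.cons_append, List.nil_append]
  refine List.isChain_cons_cons.mpr ⟨far _ _ (by omega), ?_⟩
  refine List.isChain_cons_flatMap_range_pair_append _ (far _ _ (by omega))
    (fun j _ => far _ _ (by omega)) (fun j _ => far _ _ (by omega)) ?_
  refine List.isChain_cons_flatMap_range_pair_append _ (far _ _ (by omega))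
    (fun j _ => far _ _ (by omega)) (fun j _ => far _ _ (by omega)) ?_
  simp only [List.isChain_cons_cons, List.isChain_singleton, and_true]
  exact ⟨far _ _ (by omega), far _ _ (by omega)⟩

/-- For any positive integer n, consecutive entries of the petal permutation
of T_{2n+1,2n+3}, viewed cyclically with indices mod 4n+5, differ by more
than 1 in absolute value: no two adjacent petals have adjacent levels. -/
theorem petalSeq_no_adjacent_levels (n : ℕ) (hn : 1 ≤ n) :
    ∀ i < 4 * n + 5,
      2 ≤ |((petalSeq n).getD i 0 : ℤ) -
            ((petalSeq n).getD ((i + 1) % (4 * n + 5)) 0 : ℤ)| := by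
  intro i hi
  rw [← length_petalSeq n] at hi ⊢
  exact List.rel_getD_succ_mod_length (isChain_petalSeq_append_take_one n hn) 0 hi
end
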